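/- Let μ be a nonnegative Borel measure on (0,∞), let M ∈ ℝ^{n×n} be symmetric positive definite with smallest eigenvalue λ_min > 0, let P ∈ ℝ^{n×m} satisfy P^T P = I_m, set T = P^T M P, let b1 ∈ ℝ^n with ‖b1‖ = 1 and b = vec(b1 b1^T). Set 𝒜 = M ⊗ I_n + I_n ⊗ M and 𝒯_m = T ⊗ I_m + I_m ⊗ T. Assume ∫_0^∞ e^{−2 λ_min τ} dμ(τ) < ∞. Then the Laplace–Stieltjes matrix function applied to b, f(𝒜)b := ∫_0^∞ exp(−τ 𝒜) b dμ(τ), and its structured approximation x_m^⊗ := (P ⊗ P) (∫_0^∞ exp(−τ 𝒯_m) dμ(τ)) (P ⊗ P)^T b, satisfy ‖f(𝒜)b − x_m^⊗‖ ≤ 2 ∫_0^∞ ‖exp(−τ(M + λ_min I_n)) b1 − P exp(−τ(T + λ_min I_m)) P^T b1‖ dμ(τ). -/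

import Mathlib

open Matrix MeasureTheory
open scoped Kronecker

attribute [local instance] Matrix.normedAddCommGroup Matrix.normedSpace

/-- `vec` stacks the columns of a matrix one after the other. -/
def vecCols {n m : ℕ} (X : Matrix (Fin n) (Fin m) ℝ) : Fin m × Fin n → ℝ :=
  fun p => X p.2 p.1

noncomputable def eucNorm {ι : Type*} [Fintype ι] (x : ι → ℝ) : ℝ :=
  Real.sqrt (∑ i, x i ^ 2)

/-!
`𝒜` is a Kronecker sum, so `exp (-τ𝒜) = exp (-τM) ⊗ exp (-τM)` and
`exp (-τ𝒜) vec (b1 b1ᵀ) = vec (u uᵀ)` with `u = exp (-τM) b1`; in the same way the integrand of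
the structured approximation is `vec (v vᵀ)` with `v = P exp (-τT) Pᵀ b1`. Because
`T - λ_min I = Pᵀ (M - λ_min I) P` is positive semidefinite, the functional calculus bounds
`‖exp (-τT)‖` and `‖exp (-τM)‖` by `e^{-λ_min τ}`, so `‖u‖, ‖v‖ ≤ e^{-λ_min τ}`. Hence
`‖vec (u uᵀ) - vec (v vᵀ)‖ ≤ (‖u‖ + ‖v‖) ‖u - v‖ ≤ 2 ‖e^{-λ_min τ} (u - v)‖`, and the shift by
`λ_min I` turns `e^{-λ_min τ} (u - v)` into the integrand on the right-hand side.
-/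

section EuclideanNorm

variable {ι : Type*} [Fintype ι]

theorem eucNorm_eq_norm_toLp (x : ι → ℝ) : eucNorm x = ‖WithLp.toLp 2 x‖ := by
  simp [eucNorm, EuclideanSpace.norm_eq]

theorem eucNorm_nonneg (x : ι → ℝ) : 0 ≤ eucNorm x := Real.sqrt_nonneg _

theorem eucNorm_add_le (x y : ι → ℝ) : eucNorm (x + y) ≤ eucNorm x + eucNorm y := by
  simpa only [eucNorm_eq_norm_toLp, WithLp.toLp_add] using
    norm_add_le (WithLp.toLp 2 x) (WithLp.toLp 2 y)

theorem eucNorm_sub_le (x y : ι → ℝ) : eucNorm (x - y) ≤ eucNorm x + eucNorm y := by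
  simpa only [eucNorm_eq_norm_toLp, WithLp.toLp_sub] using
    norm_sub_le (WithLp.toLp 2 x) (WithLp.toLp 2 y)

theorem eucNorm_smul (c : ℝ) (x : ι → ℝ) : eucNorm (c • x) = |c| * eucNorm x := by
  simpa only [eucNorm_eq_norm_toLp, WithLp.toLp_smul, Real.norm_eq_abs] using
    norm_smul c (WithLp.toLp 2 x)

theorem norm_le_eucNorm (x : ι → ℝ) : ‖x‖ ≤ eucNorm x := by
  refine (pi_norm_le_iff_of_nonneg (eucNorm_nonneg x)).mpr fun i => ?_
  simpa only [eucNorm_eq_norm_toLp] using PiLp.norm_apply_le (WithLp.toLp 2 x) i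

theorem abs_apply_le_eucNorm (x : ι → ℝ) (i : ι) : |x i| ≤ eucNorm x :=
  (norm_le_pi_norm x i).trans (norm_le_eucNorm x)

theorem continuous_eucNorm : Continuous (eucNorm : (ι → ℝ) → ℝ) := by
  unfold eucNorm
  fun_prop

end EuclideanNorm

section L2OperatorNorm

open scoped Matrix.Norms.L2Operator MatrixOrder

-- Otherwise the entrywise sup norm installed above would be picked for rectangular matrices.
attribute [-instance] Matrix.normedAddCommGroup Matrix.normedSpace

variable {ι κ : Type*} [Fintype ι] [Fintype κ] [DecidableEq κ]

theorem eucNorm_mulVec_le (A : Matrix ι κ ℝ) (x : κ → ℝ) :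
    eucNorm (A *ᵥ x) ≤ ‖A‖ * eucNorm x := by
  rw [eucNorm_eq_norm_toLp, eucNorm_eq_norm_toLp]
  exact A.l2_opNorm_mulVec (WithLp.toLp 2 x)

theorem abs_apply_le_l2_opNorm (A : Matrix ι κ ℝ) (i : ι) (j : κ) : |A i j| ≤ ‖A‖ :=
  calc |A i j| = |(A *ᵥ Pi.single j 1) i| := by rw [mulVec_single_one, col_apply]
    _ ≤ eucNorm (A *ᵥ Pi.single j 1) := abs_apply_le_eucNorm _ i
    _ ≤ ‖A‖ * eucNorm (Pi.single j (1 : ℝ)) := eucNorm_mulVec_le A _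
    _ = ‖A‖ := by
      rw [eucNorm_eq_norm_toLp, PiLp.toLp_single, PiLp.norm_single, norm_one, mul_one]

theorem l2_opNorm_le_one_of_transpose_mul_self {P : Matrix ι κ ℝ} (hP : Pᵀ * P = 1) :
    ‖P‖ ≤ 1 := by
  have h : ‖P‖ * ‖P‖ = ‖(1 : Matrix κ κ ℝ)‖ := by
    rw [← l2_opNorm_conjTranspose_mul_self, conjTranspose_eq_transpose_of_trivial, hP]
  rcases subsingleton_or_nontrivial (Matrix κ κ ℝ) with _ | _
  · rw [Subsingleton.elim (1 : Matrix κ κ ℝ) 0, norm_zero] at h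
    nlinarith [norm_nonneg P]
  · rw [CStarRing.norm_one] at h
    nlinarith [norm_nonneg P]

theorem eucNorm_mulVec_le_of_transpose_mul_self {P : Matrix ι κ ℝ} (hP : Pᵀ * P = 1)
    (x : κ → ℝ) : eucNorm (P *ᵥ x) ≤ eucNorm x :=
  (eucNorm_mulVec_le P x).trans <|
    mul_le_of_le_one_left (eucNorm_nonneg x) (l2_opNorm_le_one_of_transpose_mul_self hP)

theorem eucNorm_transpose_mulVec_le_of_transpose_mul_self [DecidableEq ι] {P : Matrix ι κ ℝ}
    (hP : Pᵀ * P = 1) (x : ι → ℝ) : eucNorm (Pᵀ *ᵥ x) ≤ eucNorm x := by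
  refine (eucNorm_mulVec_le Pᵀ x).trans (mul_le_of_le_one_left (eucNorm_nonneg x) ?_)
  rw [← conjTranspose_eq_transpose_of_trivial, l2_opNorm_conjTranspose]
  exact l2_opNorm_le_one_of_transpose_mul_self hP

variable [DecidableEq ι]

theorem l2_opNorm_exp_neg_smul_le {S : Matrix ι ι ℝ} {lam τ : ℝ}
    (hS : (S - lam • 1).PosSemidef) (hτ : 0 ≤ τ) :
    ‖NormedSpace.exp ((-τ) • S)‖ ≤ Real.exp (-(lam * τ)) := by
  have hSa : IsSelfAdjoint S := by
    simpa only [sub_add_cancel] using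
      (hS.isHermitian.add (isHermitian_one.smul (.all lam))).isSelfAdjoint
  have hspec : ∀ x ∈ spectrum ℝ S, lam ≤ x := by
    rw [← algebraMap_le_iff_le_spectrum hSa, Algebra.algebraMap_eq_smul_one, Matrix.le_iff]
    exact hS
  -- `exp (-τ S) = cfc (fun x => e^{-τ x}) S`, whose norm is the largest `e^{-τ x}` on the spectrum.
  rw [← CFC.real_exp_eq_normedSpace_exp ((IsSelfAdjoint.all (-τ)).smul hSa),
    ← cfc_comp_const_mul (-τ) Real.exp S]
  refine norm_cfc_le (Real.exp_nonneg _) fun x hx => ?_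
  rw [Real.norm_eq_abs, abs_of_pos (Real.exp_pos _), Real.exp_le_exp]
  nlinarith [hspec x hx]

theorem eucNorm_exp_neg_smul_mulVec_le {S : Matrix ι ι ℝ} {lam τ : ℝ}
    (hS : (S - lam • 1).PosSemidef) (hτ : 0 ≤ τ) (x : ι → ℝ) :
    eucNorm (NormedSpace.exp ((-τ) • S) *ᵥ x) ≤ Real.exp (-(lam * τ)) * eucNorm x :=
  (eucNorm_mulVec_le _ x).trans <|
    mul_le_mul_of_nonneg_right (l2_opNorm_exp_neg_smul_le hS hτ) (eucNorm_nonneg x)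

theorem abs_exp_neg_smul_apply_le {S : Matrix ι ι ℝ} {lam τ : ℝ}
    (hS : (S - lam • 1).PosSemidef) (hτ : 0 ≤ τ) (i j : ι) :
    |NormedSpace.exp ((-τ) • S) i j| ≤ Real.exp (-(lam * τ)) :=
  (abs_apply_le_l2_opNorm _ i j).trans (l2_opNorm_exp_neg_smul_le hS hτ)

end L2OperatorNorm

section Loewner

open scoped MatrixOrder

variable {ι κ : Type*} [Fintype ι] [Fintype κ] [DecidableEq ι] [DecidableEq κ]

theorem Matrix.IsHermitian.posSemidef_sub_smul_one {M : Matrix ι ι ℝ} (hM : M.IsHermitian)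
    {lam : ℝ} (hlam : ∀ i, lam ≤ hM.eigenvalues i) : (M - lam • 1).PosSemidef := by
  rw [← Matrix.le_iff, ← Algebra.algebraMap_eq_smul_one,
    algebraMap_le_iff_le_spectrum hM.isSelfAdjoint, hM.spectrum_real_eq_range_eigenvalues]
  rintro - ⟨i, rfl⟩
  exact hlam i

theorem Matrix.PosSemidef.transpose_mul_mul_sub_smul_one {M : Matrix ι ι ℝ} {lam : ℝ}
    (hM : (M - lam • 1).PosSemidef) {P : Matrix ι κ ℝ} (hP : Pᵀ * P = 1) :
    (Pᵀ * M * P - lam • 1).PosSemidef := by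
  have h := hM.conjTranspose_mul_mul_same P
  rwa [conjTranspose_eq_transpose_of_trivial, Matrix.mul_sub, Matrix.sub_mul, Matrix.mul_smul,
    Matrix.mul_one, Matrix.smul_mul, hP] at h

end Loewner

theorem eucNorm_mulVec_exp_neg_smul_compression_mulVec_le {ι κ : Type*} [Fintype ι] [Fintype κ]
    [DecidableEq ι] [DecidableEq κ] {M : Matrix ι ι ℝ} {lam τ : ℝ} (hM : (M - lam • 1).PosSemidef)
    {P : Matrix ι κ ℝ} (hP : Pᵀ * P = 1) (hτ : 0 ≤ τ) (x : ι → ℝ) :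
    eucNorm (P *ᵥ (NormedSpace.exp ((-τ) • (Pᵀ * M * P)) *ᵥ (Pᵀ *ᵥ x))) ≤
      Real.exp (-(lam * τ)) * eucNorm x :=
  (eucNorm_mulVec_le_of_transpose_mul_self hP _).trans <|
    (eucNorm_exp_neg_smul_mulVec_le (hM.transpose_mul_mul_sub_smul_one hP) hτ _).trans <|
      mul_le_mul_of_nonneg_left (eucNorm_transpose_mulVec_le_of_transpose_mul_self hP x)
        (Real.exp_nonneg _)

section Kronecker

variable {ι κ : Type*} [DecidableEq ι] [DecidableEq κ]

theorem smul_kroneckerSum (c : ℝ) (A : Matrix ι ι ℝ) (B : Matrix κ κ ℝ) :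
    c • (A ⊗ₖ (1 : Matrix κ κ ℝ) + (1 : Matrix ι ι ℝ) ⊗ₖ B) =
      (c • A) ⊗ₖ (1 : Matrix κ κ ℝ) + (1 : Matrix ι ι ℝ) ⊗ₖ (c • B) := by
  rw [smul_add, smul_kronecker, kronecker_smul]

variable [Fintype ι] [Fintype κ]

def kroneckerOneRingHom : Matrix ι ι ℝ →+* Matrix (ι × κ) (ι × κ) ℝ where
  toFun A := A ⊗ₖ 1
  map_one' := one_kronecker_one
  map_mul' A B := by rw [← mul_kronecker_mul, one_mul]
  map_zero' := zero_kronecker _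
  map_add' A B := add_kronecker A B _

def oneKroneckerRingHom : Matrix κ κ ℝ →+* Matrix (ι × κ) (ι × κ) ℝ where
  toFun B := 1 ⊗ₖ B
  map_one' := one_kronecker_one
  map_mul' A B := by rw [← mul_kronecker_mul, one_mul]
  map_zero' := kronecker_zero _
  map_add' A B := kronecker_add _ A B

open scoped Matrix.Norms.Operator in
theorem exp_kroneckerSum (A : Matrix ι ι ℝ) (B : Matrix κ κ ℝ) :
    NormedSpace.exp (A ⊗ₖ (1 : Matrix κ κ ℝ) + (1 : Matrix ι ι ℝ) ⊗ₖ B) =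
      NormedSpace.exp A ⊗ₖ NormedSpace.exp B := by
  have hcomm : Commute (A ⊗ₖ (1 : Matrix κ κ ℝ)) ((1 : Matrix ι ι ℝ) ⊗ₖ B) := by
    simp only [Commute, SemiconjBy, ← mul_kronecker_mul, one_mul, mul_one]
  have hA : NormedSpace.exp (A ⊗ₖ (1 : Matrix κ κ ℝ)) = NormedSpace.exp A ⊗ₖ 1 :=
    (NormedSpace.map_exp (kroneckerOneRingHom (κ := κ))
      (continuous_pi fun _ => continuous_pi fun _ =>
        (continuous_apply_apply _ _).mul continuous_const) A).symm
  have hB : NormedSpace.exp ((1 : Matrix ι ι ℝ) ⊗ₖ B) = 1 ⊗ₖ NormedSpace.exp B :=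
    (NormedSpace.map_exp (oneKroneckerRingHom (ι := ι))
      (continuous_pi fun _ => continuous_pi fun _ =>
        continuous_const.mul (continuous_apply_apply _ _)) B).symm
  rw [Matrix.exp_add_of_commute _ _ hcomm, hA, hB, ← mul_kronecker_mul, one_mul, mul_one]

end Kronecker

section MatrixExponential

open scoped Matrix.Norms.Operator

variable {ι : Type*} [Fintype ι] [DecidableEq ι]

theorem continuous_exp_neg_smul (S : Matrix ι ι ℝ) :
    Continuous fun τ : ℝ => NormedSpace.exp ((-τ) • S) :=
  NormedSpace.exp_continuous.comp (by fun_prop)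

theorem exp_neg_smul_add_smul_one (S : Matrix ι ι ℝ) (τ c : ℝ) :
    NormedSpace.exp ((-τ) • (S + c • 1)) =
      Real.exp (-(c * τ)) • NormedSpace.exp ((-τ) • S) := by
  have hsplit : (-τ) • (S + c • 1) = (-τ) • S + algebraMap ℝ (Matrix ι ι ℝ) (-(c * τ)) := by
    rw [Algebra.algebraMap_eq_smul_one, smul_add, smul_smul]
    ring_nf
  have hscalar : NormedSpace.exp (algebraMap ℝ (Matrix ι ι ℝ) (-(c * τ))) =
      algebraMap ℝ (Matrix ι ι ℝ) (Real.exp (-(c * τ))) := by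
    rw [Real.exp_eq_exp_ℝ]
    exact (NormedSpace.algebraMap_exp_comm _).symm
  rw [hsplit, Matrix.exp_add_of_commute _ _ (Algebra.commute_algebraMap_right _ _), hscalar,
    ← Algebra.commutes, ← Algebra.smul_def]

end MatrixExponential

section Vectorization

variable {n m p q : ℕ}

theorem kronecker_mulVec_vecCols_vecMulVec (A : Matrix (Fin p) (Fin m) ℝ)
    (B : Matrix (Fin q) (Fin n) ℝ) (x : Fin n → ℝ) (y : Fin m → ℝ) :
    (A ⊗ₖ B) *ᵥ vecCols (vecMulVec x y) = vecCols (vecMulVec (B *ᵥ x) (A *ᵥ y)) := by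
  refine (kronecker_mulVec_vec B (vecMulVec x y) A).trans ?_
  rw [mul_vecMulVec, vecMulVec_mul, vecMul_transpose]
  rfl

theorem exp_kroneckerSum_mulVec_vecCols_vecMulVec (A : Matrix (Fin m) (Fin m) ℝ)
    (B : Matrix (Fin n) (Fin n) ℝ) (x : Fin n → ℝ) (y : Fin m → ℝ) :
    NormedSpace.exp (A ⊗ₖ (1 : Matrix (Fin n) (Fin n) ℝ) + (1 : Matrix (Fin m) (Fin m) ℝ) ⊗ₖ B)
        *ᵥ vecCols (vecMulVec x y) =
      vecCols (vecMulVec (NormedSpace.exp B *ᵥ x) (NormedSpace.exp A *ᵥ y)) := by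
  rw [exp_kroneckerSum, kronecker_mulVec_vecCols_vecMulVec]

theorem continuous_vecCols : Continuous (vecCols : Matrix (Fin n) (Fin m) ℝ → _) :=
  continuous_pi fun p => continuous_apply_apply p.2 p.1

theorem eucNorm_vecCols_vecMulVec (x : Fin n → ℝ) (y : Fin m → ℝ) :
    eucNorm (vecCols (vecMulVec x y)) = eucNorm x * eucNorm y := by
  unfold eucNorm
  rw [← Real.sqrt_mul (by positivity), Finset.sum_mul_sum, Fintype.sum_prod_type, Finset.sum_comm]
  simp only [vecCols, vecMulVec_apply, mul_pow]

theorem eucNorm_vecCols_vecMulVec_self_sub_le (x y : Fin n → ℝ) :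
    eucNorm (vecCols (vecMulVec x x) - vecCols (vecMulVec y y)) ≤
      (eucNorm x + eucNorm y) * eucNorm (x - y) := by
  have hsplit : vecCols (vecMulVec x x) - vecCols (vecMulVec y y) =
      vecCols (vecMulVec x (x - y)) + vecCols (vecMulVec (x - y) y) := by
    ext
    simp only [vecCols, vecMulVec_apply, Pi.sub_apply, Pi.add_apply]
    ring
  calc _ ≤ eucNorm (vecCols (vecMulVec x (x - y))) + eucNorm (vecCols (vecMulVec (x - y) y)) :=
        hsplit ▸ eucNorm_add_le _ _
    _ = (eucNorm x + eucNorm y) * eucNorm (x - y) := by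
        rw [eucNorm_vecCols_vecMulVec, eucNorm_vecCols_vecMulVec]
        ring

end Vectorization

section Integration

variable {α ι κ : Type*} [Fintype ι] [Fintype κ] [MeasurableSpace α] {ν : Measure α}

-- Integrability is asked entrywise: with the sup norm as a local instance, `Integrable` for
-- `Matrix`-valued functions does not elaborate (the matrix topology is not syntactically the
-- norm topology).
theorem mulVec_integral_mulVec {ι' : Type*} [Fintype ι'] (A : Matrix ι' ι ℝ)
    {G : α → Matrix ι κ ℝ} (hG : ∀ i j, Integrable (fun a => G a i j) ν) (c : κ → ℝ) :
    A *ᵥ ((∫ a, G a ∂ν) *ᵥ c) = ∫ a, A *ᵥ (G a *ᵥ c) ∂ν :=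
  ((LinearMap.toContinuousLinearMap ((mulVecLin A).comp ((mulVecBilin ℝ ℝ).flip c))
    ).integral_comp_comm (Integrable.of_eval fun i => Integrable.of_eval (hG i))).symm

theorem eucNorm_integral_le {f : α → ι → ℝ} (hf : Integrable f ν) :
    eucNorm (∫ a, f a ∂ν) ≤ ∫ a, eucNorm (f a) ∂ν := by
  have hcomm : WithLp.toLp 2 (∫ a, f a ∂ν) = ∫ a, WithLp.toLp 2 (f a) ∂ν :=
    ((PiLp.continuousLinearEquiv 2 ℝ fun _ : ι => ℝ).symm.toContinuousLinearMap
      |>.integral_comp_comm hf).symm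
  simpa only [eucNorm_eq_norm_toLp, hcomm] using norm_integral_le_integral_norm _

theorem MeasureTheory.Integrable.of_eucNorm_le {f : α → ι → ℝ} {g : α → ℝ}
    (hg : Integrable g ν) (hf : AEStronglyMeasurable f ν)
    (hfg : ∀ᵐ a ∂ν, eucNorm (f a) ≤ g a) : Integrable f ν :=
  hg.mono' hf (hfg.mono fun _ h => (norm_le_eucNorm _).trans h)

end Integration

theorem eucNorm_integral_vecCols_vecMulVec_sub_le {n : ℕ} {ν : Measure ℝ}
    {u v : ℝ → Fin n → ℝ} {w : ℝ → ℝ} (hu : Continuous u) (hv : Continuous v)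
    (hw : Continuous w) (hw2 : Integrable (fun τ => w τ ^ 2) ν)
    (huw : ∀ᵐ τ ∂ν, eucNorm (u τ) ≤ w τ) (hvw : ∀ᵐ τ ∂ν, eucNorm (v τ) ≤ w τ) :
    eucNorm ((∫ τ, vecCols (vecMulVec (u τ) (u τ)) ∂ν) -
        ∫ τ, vecCols (vecMulVec (v τ) (v τ)) ∂ν) ≤
      2 * ∫ τ, w τ * eucNorm (u τ - v τ) ∂ν := by
  have hrankOne : ∀ {x : ℝ → Fin n → ℝ}, Continuous x →
      (∀ᵐ τ ∂ν, eucNorm (x τ) ≤ w τ) → Integrable (fun τ => vecCols (vecMulVec (x τ) (x τ))) ν :=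
    fun hx hxw =>
      hw2.of_eucNorm_le (continuous_vecCols.comp (hx.matrix_vecMulVec hx)).aestronglyMeasurable
        (hxw.mono fun τ h => by
          rw [eucNorm_vecCols_vecMulVec, ← sq]
          exact pow_le_pow_left₀ (eucNorm_nonneg _) h 2)
  have hpointwise : ∀ᵐ τ ∂ν, eucNorm (vecCols (vecMulVec (u τ) (u τ)) -
      vecCols (vecMulVec (v τ) (v τ))) ≤ 2 * (w τ * eucNorm (u τ - v τ)) := by
    filter_upwards [huw, hvw] with τ hu hv
    calc _ ≤ (eucNorm (u τ) + eucNorm (v τ)) * eucNorm (u τ - v τ) :=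
          eucNorm_vecCols_vecMulVec_self_sub_le _ _
      _ ≤ 2 * (w τ * eucNorm (u τ - v τ)) := by
          nlinarith [eucNorm_nonneg (u τ - v τ)]
  have hweighted : Integrable (fun τ => w τ * eucNorm (u τ - v τ)) ν := by
    refine (hw2.const_mul 2).mono'
      (hw.mul (continuous_eucNorm.comp (hu.sub hv))).aestronglyMeasurable ?_
    filter_upwards [huw, hvw] with τ hu hv
    have hw0 : 0 ≤ w τ := (eucNorm_nonneg _).trans hu
    rw [Real.norm_eq_abs, abs_of_nonneg (mul_nonneg hw0 (eucNorm_nonneg _))]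
    nlinarith [eucNorm_sub_le (u τ) (v τ)]
  rw [← integral_sub (hrankOne hu huw) (hrankOne hv hvw), ← integral_const_mul]
  exact (eucNorm_integral_le ((hrankOne hu huw).sub (hrankOne hv hvw))).trans
    (integral_mono_of_nonneg (ae_of_all _ fun _ => eucNorm_nonneg _) (hweighted.const_mul 2)
      hpointwise)

theorem integrable_exp_neg_smul_kroneckerSum_apply {ι : Type*} [Fintype ι] [DecidableEq ι]
    {S : Matrix ι ι ℝ} {lam : ℝ} (hS : (S - lam • 1).PosSemidef) {ν : Measure ℝ}
    (hν : ∀ᵐ τ ∂ν, 0 ≤ τ) (hw2 : Integrable (fun τ => Real.exp (-(lam * τ)) ^ 2) ν)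
    (i j : ι × ι) :
    Integrable (fun τ : ℝ =>
      (NormedSpace.exp ((-τ) • (S ⊗ₖ 1 + 1 ⊗ₖ S)) : Matrix (ι × ι) (ι × ι) ℝ) i j) ν := by
  simp only [smul_kroneckerSum, exp_kroneckerSum, kroneckerMap_apply]
  refine hw2.mono' (((continuous_exp_neg_smul S).matrix_elem _ _).mul
    ((continuous_exp_neg_smul S).matrix_elem _ _)).aestronglyMeasurable ?_
  filter_upwards [hν] with τ hτ
  rw [Real.norm_eq_abs, abs_mul, sq]
  exact mul_le_mul (abs_exp_neg_smul_apply_le hS hτ _ _) (abs_exp_neg_smul_apply_le hS hτ _ _)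
    (abs_nonneg _) (Real.exp_nonneg _)

theorem laplace_stieltjes_structured_error_bound_general {n m : ℕ}
    (μ : Measure ℝ)
    (M : Matrix (Fin n) (Fin n) ℝ) (hM : M.IsHermitian)
    (lam : ℝ)
    (hlam_le : ∀ i, lam ≤ hM.eigenvalues i)
    (P : Matrix (Fin n) (Fin m) ℝ) (hP : Pᵀ * P = 1)
    (b1 : Fin n → ℝ) (hb1 : eucNorm b1 = 1)
    (hμint : IntegrableOn (fun τ : ℝ => Real.exp (-2 * lam * τ)) (Set.Ioi 0) μ) :
    eucNorm
        ((∫ τ in Set.Ioi (0 : ℝ),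
            NormedSpace.exp
                ((-τ) •
                  (M ⊗ₖ (1 : Matrix (Fin n) (Fin n) ℝ) +
                    (1 : Matrix (Fin n) (Fin n) ℝ) ⊗ₖ M)) *ᵥ
              vecCols (vecMulVec b1 b1) ∂μ) -
          (P ⊗ₖ P) *ᵥ
            ((∫ τ in Set.Ioi (0 : ℝ),
                NormedSpace.exp
                  ((-τ) •
                    ((Pᵀ * M * P) ⊗ₖ (1 : Matrix (Fin m) (Fin m) ℝ) +
                      (1 : Matrix (Fin m) (Fin m) ℝ) ⊗ₖ (Pᵀ * M * P))) ∂μ) *ᵥ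
              ((P ⊗ₖ P)ᵀ *ᵥ vecCols (vecMulVec b1 b1)))) ≤
      2 *
        ∫ τ in Set.Ioi (0 : ℝ),
          eucNorm
            (NormedSpace.exp ((-τ) • (M + lam • (1 : Matrix (Fin n) (Fin n) ℝ))) *ᵥ b1 -
              P *ᵥ
                (NormedSpace.exp
                    ((-τ) • (Pᵀ * M * P + lam • (1 : Matrix (Fin m) (Fin m) ℝ))) *ᵥ
                  (Pᵀ *ᵥ b1))) ∂μ := by
  have hMlam := hM.posSemidef_sub_smul_one hlam_le
  have hpos : ∀ᵐ τ ∂μ.restrict (Set.Ioi 0), (0 : ℝ) ≤ τ :=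
    ae_restrict_of_forall_mem measurableSet_Ioi fun τ hτ => le_of_lt hτ
  have hw2 : IntegrableOn (fun τ : ℝ => Real.exp (-(lam * τ)) ^ 2) (Set.Ioi 0) μ := by
    refine hμint.congr_fun (fun τ _ => ?_) measurableSet_Ioi
    rw [← Real.exp_nat_mul]
    ring_nf
  have hu : ∀ᵐ τ ∂μ.restrict (Set.Ioi 0),
      eucNorm (NormedSpace.exp ((-τ) • M) *ᵥ b1) ≤ Real.exp (-(lam * τ)) := by
    filter_upwards [hpos] with τ hτ
    simpa only [hb1, mul_one] using eucNorm_exp_neg_smul_mulVec_le hMlam hτ b1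
  have hv : ∀ᵐ τ ∂μ.restrict (Set.Ioi 0),
      eucNorm (P *ᵥ (NormedSpace.exp ((-τ) • (Pᵀ * M * P)) *ᵥ (Pᵀ *ᵥ b1))) ≤
        Real.exp (-(lam * τ)) := by
    filter_upwards [hpos] with τ hτ
    simpa only [hb1, mul_one] using
      eucNorm_mulVec_exp_neg_smul_compression_mulVec_le hMlam hP hτ b1
  rw [mulVec_integral_mulVec _ (integrable_exp_neg_smul_kroneckerSum_apply
    (hMlam.transpose_mul_mul_sub_smul_one hP) hpos hw2)]
  simp only [smul_kroneckerSum, ← kroneckerMap_transpose, kronecker_mulVec_vecCols_vecMulVec,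
    exp_kroneckerSum_mulVec_vecCols_vecMulVec, exp_neg_smul_add_smul_one, smul_mulVec,
    mulVec_smul, ← smul_sub, eucNorm_smul, abs_of_pos (Real.exp_pos _)]
  exact eucNorm_integral_vecCols_vecMulVec_sub_le
    ((continuous_exp_neg_smul M).matrix_mulVec continuous_const)
    (continuous_const.matrix_mulVec
      ((continuous_exp_neg_smul _).matrix_mulVec continuous_const))
    (by fun_prop) hw2 hu hv

/-- Proposition 5.2 of the paper. For a Laplace–Stieltjes function
`f(x) = ∫_0^∞ e^{-τ x} dμ(τ)`, a symmetric positive definite `M` with smallest eigenvalue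
`λ_min > 0`, a matrix `P` with orthonormal columns, `T = Pᵀ M P`, `b1` of unit norm and
`b = vec (b1 b1ᵀ)`, the structured approximation
`x_m^⊗ = (P ⊗ P) f(𝒯_m) (P ⊗ P)ᵀ b` to `f(𝒜) b`, where `𝒜 = M ⊗ I + I ⊗ M` and
`𝒯_m = T ⊗ I + I ⊗ T`, satisfies
`‖f(𝒜)b − x_m^⊗‖ ≤ 2 ∫_0^∞ ‖e^{-τ(M+λ_min I)} b1 − P e^{-τ(T+λ_min I)} Pᵀ b1‖ dμ(τ)`. -/
theorem laplace_stieltjes_structured_error_bound {n m : ℕ}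
    (μ : Measure ℝ)
    (M : Matrix (Fin n) (Fin n) ℝ) (hM : M.IsHermitian) (hMpd : M.PosDef)
    (lam : ℝ) (hlam_pos : 0 < lam)
    (hlam_le : ∀ i, lam ≤ hM.eigenvalues i) (hlam_mem : ∃ i, hM.eigenvalues i = lam)
    (P : Matrix (Fin n) (Fin m) ℝ) (hP : Pᵀ * P = 1)
    (b1 : Fin n → ℝ) (hb1 : eucNorm b1 = 1)
    (hμint : IntegrableOn (fun τ : ℝ => Real.exp (-2 * lam * τ)) (Set.Ioi 0) μ) :
    eucNorm
        ((∫ τ in Set.Ioi (0 : ℝ),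
            NormedSpace.exp
                ((-τ) •
                  (M ⊗ₖ (1 : Matrix (Fin n) (Fin n) ℝ) +
                    (1 : Matrix (Fin n) (Fin n) ℝ) ⊗ₖ M)) *ᵥ
              vecCols (vecMulVec b1 b1) ∂μ) -
          (P ⊗ₖ P) *ᵥ
            ((∫ τ in Set.Ioi (0 : ℝ),
                NormedSpace.exp
                  ((-τ) •
                    ((Pᵀ * M * P) ⊗ₖ (1 : Matrix (Fin m) (Fin m) ℝ) +
                      (1 : Matrix (Fin m) (Fin m) ℝ) ⊗ₖ (Pᵀ * M * P))) ∂μ) *ᵥ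
              ((P ⊗ₖ P)ᵀ *ᵥ vecCols (vecMulVec b1 b1)))) ≤
      2 *
        ∫ τ in Set.Ioi (0 : ℝ),
          eucNorm
            (NormedSpace.exp ((-τ) • (M + lam • (1 : Matrix (Fin n) (Fin n) ℝ))) *ᵥ b1 -
              P *ᵥ
                (NormedSpace.exp
                    ((-τ) • (Pᵀ * M * P + lam • (1 : Matrix (Fin m) (Fin m) ℝ))) *ᵥ
                  (Pᵀ *ᵥ b1))) ∂μ :=
  laplace_stieltjes_structured_error_bound_general μ M hM lam hlam_le P hP b1 hb1 hμint
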